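/- Let R be a commutative ring, n ≥ 1, Q = R⟦q₁,…,qₙ⟧, and A a commutative Q-algebra with a Q-bilinear symmetric Frobenius pairing ⟨⟨·,·⟩⟩ (i.e., ⟨⟨ab, c⟩⟩ = ⟨⟨a, bc⟩⟩). Suppose a, b ∈ A satisfy ⟨⟨a, b⟩⟩ = ∑_{d ≥ d₀} q^d for some d₀ ∈ ℕ^n (the power series with coefficient 1 at every multi-index d ≥ d₀ and 0 otherwise). Define χ(x) = ⟨⟨x, 1⟩⟩ · ∏ᵢ(1 − qᵢ). Then χ(a·b) = q^{d₀}. -/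

import Mathlib

/-!
Let `G s` be the sum of the monomials involving none of the variables in `s`. For `j ∉ s`,
splitting off the monomials divisible by `X j` gives `G s = G (insert j s) + X j * G s`, i.e.
`G s * (1 - X j) = G (insert j s)`; hence `G ∅ * ∏ i, (1 - X i) = G univ = 1`. The series
`∑_{d ≥ d₀} X^d` is `X^d₀ * G ∅`, and Frobenius reciprocity gives `⟨⟨a * b, 1⟩⟩ = ⟨⟨a, b⟩⟩`.
-/

namespace MvPowerSeries

variable {σ R : Type*} [CommRing R]

open Classical in
noncomputable def onesAvoiding (s : Finset σ) : MvPowerSeries σ R :=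
  fun d => if ∀ i ∈ s, d i = 0 then 1 else 0

open Classical in
theorem coeff_onesAvoiding (s : Finset σ) (d : σ →₀ ℕ) :
    coeff d (onesAvoiding s : MvPowerSeries σ R) = if ∀ i ∈ s, d i = 0 then 1 else 0 :=
  rfl

section DecidableEq

variable [DecidableEq σ]

theorem onesAvoiding_eq_insert_add_X_mul {s : Finset σ} {j : σ} (hj : j ∉ s) :
    (onesAvoiding s : MvPowerSeries σ R) =
      onesAvoiding (insert j s) + X j * onesAvoiding s := by
  ext d
  rw [map_add, X_def, coeff_monomial_mul, coeff_onesAvoiding, coeff_onesAvoiding,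
    coeff_onesAvoiding, one_mul]
  by_cases hdj : d j = 0
  · have hjd : ¬Finsupp.single j 1 ≤ d := by simp [Finsupp.single_le_iff, hdj]
    simp [hjd, hdj]
  · have hjd : Finsupp.single j 1 ≤ d := Finsupp.single_le_iff.2 (by omega)
    have hsub : ∀ i ∈ s, d i - Finsupp.single j 1 i = d i := fun i hi => by
      rw [Finsupp.single_eq_of_ne (by rintro rfl; exact hj hi), Nat.sub_zero]
    simp +contextual [hjd, hdj, hsub]

theorem onesAvoiding_mul_one_sub_X {s : Finset σ} {j : σ} (hj : j ∉ s) :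
    (onesAvoiding s : MvPowerSeries σ R) * (1 - X j) = onesAvoiding (insert j s) := by
  linear_combination onesAvoiding_eq_insert_add_X_mul (R := R) hj

theorem onesAvoiding_empty_mul_prod_one_sub_X (s : Finset σ) :
    (onesAvoiding ∅ : MvPowerSeries σ R) * ∏ i ∈ s, (1 - X i) = onesAvoiding s := by
  induction s using Finset.induction_on with
  | empty => rw [Finset.prod_empty, mul_one]
  | insert j s hj ih =>
    rw [Finset.prod_insert hj, mul_left_comm, ih, mul_comm, onesAvoiding_mul_one_sub_X hj]

theorem onesAvoiding_univ [Fintype σ] : (onesAvoiding Finset.univ : MvPowerSeries σ R) = 1 := by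
  ext d
  simp [coeff_onesAvoiding, coeff_one, Finsupp.ext_iff]

end DecidableEq

open Classical in
noncomputable def onesAbove (d₀ : σ →₀ ℕ) : MvPowerSeries σ R :=
  fun d => if d₀ ≤ d then 1 else 0

theorem onesAbove_eq_monomial_mul (d₀ : σ →₀ ℕ) :
    (onesAbove d₀ : MvPowerSeries σ R) = monomial d₀ 1 * onesAvoiding ∅ := by
  ext d
  rw [coeff_monomial_mul, coeff_onesAvoiding, one_mul]
  simp only [Finset.notMem_empty, IsEmpty.forall_iff, implies_true, if_true]
  rfl

theorem onesAbove_mul_prod_one_sub_X [Fintype σ] (d₀ : σ →₀ ℕ) :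
    (onesAbove d₀ : MvPowerSeries σ R) * ∏ i, (1 - X i) = monomial d₀ 1 := by
  classical
  rw [onesAbove_eq_monomial_mul, mul_assoc, onesAvoiding_empty_mul_prod_one_sub_X,
    onesAvoiding_univ, mul_one]

end MvPowerSeries

open Classical in
theorem stmt_4_general (R : Type*) [CommRing R] (n : ℕ)
    (A : Type*) [CommRing A] [Algebra (MvPowerSeries (Fin n) R) A]
    (B : A →ₗ[MvPowerSeries (Fin n) R] A →ₗ[MvPowerSeries (Fin n) R]
        MvPowerSeries (Fin n) R)
    (hfrob : ∀ a b c : A, B (a * b) c = B a (b * c))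
    (a b : A) (d₀ : Fin n →₀ ℕ)
    (hab : B a b =
      ((fun d : Fin n →₀ ℕ => if d₀ ≤ d then (1 : R) else 0) :
        MvPowerSeries (Fin n) R)) :
    B (a * b) 1 * (∏ i : Fin n, (1 - MvPowerSeries.X i)) =
      MvPowerSeries.monomial d₀ (1 : R) := by
  rw [hfrob, mul_one, hab]
  exact MvPowerSeries.onesAbove_mul_prod_one_sub_X d₀

open Classical in
theorem stmt_4 (R : Type*) [CommRing R] (n : ℕ) (hn : 0 < n)
    (A : Type*) [CommRing A] [Algebra (MvPowerSeries (Fin n) R) A]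
    (B : A →ₗ[MvPowerSeries (Fin n) R] A →ₗ[MvPowerSeries (Fin n) R]
        MvPowerSeries (Fin n) R)
    (hsymm : ∀ a b : A, B a b = B b a)
    (hfrob : ∀ a b c : A, B (a * b) c = B a (b * c))
    (a b : A) (d₀ : Fin n →₀ ℕ)
    (hab : B a b =
      ((fun d : Fin n →₀ ℕ => if d₀ ≤ d then (1 : R) else 0) :
        MvPowerSeries (Fin n) R)) :
    B (a * b) 1 * (∏ i : Fin n, (1 - MvPowerSeries.X i)) =
      MvPowerSeries.monomial d₀ (1 : R) :=
  stmt_4_general R n A B hfrob a b d₀ hab
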